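/- Let f ∈ ℂ[h], λ ∈ S_f, ż ∈ ℂ, and let n ≥ 1 with λ(i+n) = λ(i) for all i, and a ∈ ℂ*. Define operators on ℂ^n (basis e_0,…,e_{n−1}, indices mod n) by: H e_i = λ(i) e_i; X e_i = e_{i+1} for i < n−1 and X e_{n−1} = a·e_0; Y e_i = (λ(i) + ż) e_{i−1} for i ≥ 1 and Y e_0 = (λ(0) + ż)·a^{−1}·e_{n−1}. Then H∘X = X∘f(H), Y∘H = f(H)∘Y, and Y∘X − X∘Y = f(H) − H. -/

import Mathlib

/-!
On `ℂⁿ` with indices in `ℤ/n`, `H` is diagonal and `X`, `Y` are weighted shifts by `+1` and `-1`.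
Conjugating a weighted shift by a diagonal matrix only reindexes the diagonal, so the first two
relations reduce to `f(λ(j)) = λ(j+1)`, which descends to `ℤ/n` by periodicity. Both `YX` and `XY`
are diagonal, and since the weights `a` and `a⁻¹` meet on the same edge `e_{n-1} ↔ e_0`, their
entries are `λ(j+1) + ż` and `λ(j) + ż`; the difference is `f(H) - H`.
-/

open Polynomial Matrix

theorem Fin.val_eq_val_add_one_mod_iff {n : ℕ} [NeZero n] (i j : Fin n) :
    (i : ℕ) = ((j : ℕ) + 1) % n ↔ i = j + 1 := by
  rw [Fin.ext_iff, Fin.val_add, Fin.val_one', Nat.add_mod_mod]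

theorem Fin.val_eq_sub_one_iff_add_one_eq_zero {n : ℕ} [NeZero n] (j : Fin n) :
    (j : ℕ) = n - 1 ↔ j + 1 = 0 := by
  rw [← Fin.val_eq_zero_iff, Fin.val_add, Fin.val_one', Nat.add_mod_mod]
  rcases (show (j : ℕ) + 1 ≤ n from j.isLt).lt_or_eq with h | h
  · rw [Nat.mod_eq_of_lt h]; omega
  · rw [h, Nat.mod_self]; omega

theorem Polynomial.aeval_diagonal {ι R : Type*} [Fintype ι] [DecidableEq ι] [CommSemiring R]
    (d : ι → R) (p : R[X]) : aeval (diagonal d) p = diagonal fun i => p.eval (d i) := by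
  rw [← diagonalAlgHom_apply R, aeval_algHom_apply, aeval_pi_apply]
  simp

theorem Function.Periodic.fin_val_add_one {α : Type*} {n : ℕ} [NeZero n] {g : ℤ → α}
    (hg : Function.Periodic g n) (j : Fin n) : g ((j + 1 : Fin n) : ℕ) = g ((j : ℕ) + 1) := by
  rw [Fin.val_add, Fin.val_one', Nat.add_mod_mod]
  push_cast
  rw [Int.emod_def, mul_comm]
  exact hg.sub_int_mul_eq _

namespace Matrix

section

variable {ι R : Type*} [DecidableEq ι] [AddGroup ι]

def weightedShift [Zero R] (c : ι) (w : ι → R) : Matrix ι ι R :=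
  of fun i j => if i = j + c then w j else 0

theorem weightedShift_zero [Zero R] (w : ι → R) : weightedShift 0 w = diagonal w := by
  ext i j
  by_cases h : i = j <;> simp [weightedShift, h]

variable [Fintype ι] [NonUnitalNonAssocSemiring R]

theorem diagonal_mul_weightedShift (d w : ι → R) (c : ι) :
    diagonal d * weightedShift c w = weightedShift c fun j => d (j + c) * w j := by
  ext i j
  by_cases h : i = j + c <;> simp [weightedShift, h]

theorem weightedShift_mul_diagonal (w d : ι → R) (c : ι) :
    weightedShift c w * diagonal d = weightedShift c fun j => w j * d j := by
  ext i j
  by_cases h : i = j + c <;> simp [weightedShift, h]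

theorem weightedShift_mul_weightedShift (c d : ι) (v w : ι → R) :
    weightedShift c v * weightedShift d w = weightedShift (d + c) fun j => v (j + d) * w j := by
  ext i j
  simp only [weightedShift, mul_apply, of_apply, ite_mul, zero_mul, mul_ite, mul_zero]
  rw [Finset.sum_eq_single (j + d)]
  · by_cases h : i = j + d + c <;> simp [h, add_assoc]
  · intro k _ hk; simp [hk]
  · simp

end

section

variable {n : ℕ} [NeZero n] {R : Type*} [Zero R]

theorem of_val_eq_succ_mod_eq_weightedShift_one (w : Fin n → R) :
    (of fun i j : Fin n => if (i : ℕ) = ((j : ℕ) + 1) % n then w j else 0) = weightedShift 1 w := by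
  simp only [Fin.val_eq_val_add_one_mod_iff, weightedShift]

theorem of_succ_mod_eq_val_eq_weightedShift_neg_one (w : Fin n → R) :
    (of fun i j : Fin n => if (j : ℕ) = ((i : ℕ) + 1) % n then w j else 0) =
      weightedShift (-1) w := by
  simp only [Fin.val_eq_val_add_one_mod_iff, weightedShift, eq_add_neg_iff_add_eq, eq_comm]

end

end Matrix

theorem weightedShift_heisenberg_relations {ι K : Type*} [Fintype ι] [DecidableEq ι] [AddGroup ι]
    [CommRing K] (f : K[X]) (lam : ι → K) (c : ι)
    (hlam : ∀ j, f.eval (lam j) = lam (j + c)) (v w : ι → K) (hvw : ∀ j, v (j + c) * w j = 1)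
    (z : K) :
    letI H := diagonal lam
    letI X := weightedShift c w
    letI Y := weightedShift (-c) fun j => (lam j + z) * v j
    H * X = X * aeval H f ∧ Y * H = aeval H f * Y ∧ Y * X - X * Y = aeval H f - H := by
  simp only [aeval_diagonal, hlam, diagonal_mul_weightedShift, weightedShift_mul_diagonal,
    weightedShift_mul_weightedShift, neg_add_cancel_right, add_neg_cancel, neg_add_cancel,
    weightedShift_zero]
  refine ⟨by simp only [mul_comm], by simp only [mul_comm], ?_⟩
  rw [diagonal_sub, diagonal_sub]
  congr 1
  funext j
  have hvw' := hvw (j + -c)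
  rw [neg_add_cancel_right] at hvw'
  linear_combination (lam (j + c) + z) * hvw j - (lam j + z) * hvw'

/-- The operators of the module `A'(λ, ż, a)` on `ℂⁿ` (cyclic version) satisfy
the defining relations of the generalized Heisenberg algebra `H(f)`. -/
theorem A'_module_relations (f : Polynomial ℂ) (lam : ℤ → ℂ)
    (hlam : ∀ i : ℤ, f.eval (lam i) = lam (i + 1))
    (n : ℕ) (hn : 1 ≤ n) (hper : ∀ i : ℤ, lam (i + n) = lam i)
    (zdot : ℂ) (a : ℂ) (ha : a ≠ 0) :
    letI H : Matrix (Fin n) (Fin n) ℂ := Matrix.diagonal fun i => lam (i : ℕ)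
    letI X : Matrix (Fin n) (Fin n) ℂ :=
      Matrix.of fun i j =>
        if (i : ℕ) = ((j : ℕ) + 1) % n then (if (j : ℕ) = n - 1 then a else 1) else 0
    letI Y : Matrix (Fin n) (Fin n) ℂ :=
      Matrix.of fun i j =>
        if (j : ℕ) = ((i : ℕ) + 1) % n then
          (lam (j : ℕ) + zdot) * (if (j : ℕ) = 0 then a⁻¹ else 1) else 0
    H * X = X * aeval H f ∧ Y * H = aeval H f * Y ∧
      Y * X - X * Y = aeval H f - H := by
  have : NeZero n := ⟨by omega⟩
  have hstep (j : Fin n) : f.eval (lam (j : ℕ)) = lam ((j + 1 : Fin n) : ℕ) := by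
    rw [hlam, Function.Periodic.fin_val_add_one hper]
  have hweights (j : Fin n) :
      (if ((j + 1 : Fin n) : ℕ) = 0 then a⁻¹ else 1) * (if (j : ℕ) = n - 1 then a else 1) = 1 := by
    simp only [Fin.val_eq_zero_iff, Fin.val_eq_sub_one_iff_add_one_eq_zero]
    split_ifs <;> simp [ha]
  simp only [of_val_eq_succ_mod_eq_weightedShift_one, of_succ_mod_eq_val_eq_weightedShift_neg_one]
  exact weightedShift_heisenberg_relations f _ 1 hstep _ _ hweights zdot
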